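/- Let M be a smooth manifold and f a differential character in the n-th Cheeger-Simons group Ȟⁿ(M). Then there exist a unique closed n-form ω with integral periods (the field strength F(f) = ω) and a unique integer cohomology class c(f) = [c] ∈ Hⁿ(M; ℤ) determined by any real cochain lift T of f via δT = ω − c; moreover the real cohomology class of ω equals the image of c(f) under the coefficient map Hⁿ(M; ℤ) → Hⁿ(M; ℝ), and both the field strength map F and the characteristic class map c are surjective group homomorphisms Ȟⁿ(M) → Ω^n_ℤ(M) and Ȟⁿ(M) → Hⁿ(M; ℤ) respectively. -/
import Mathlib


/-- An abstract model of the complex of smooth singular chains of a smooth manifold,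
together with the subgroups `Ω n` of real cochains obtained by integration of smooth
differential `n`-forms, satisfying the standard properties underlying Cheeger-Simons
theory: chain groups are free, Stokes' theorem (`d = δ` on forms), injectivity of the
mod-`ℤ` reduction on forms of positive degree, and the de Rham theorem (with its
integral refinement). -/
structure CSModel : Type 1 where
  C : ℕ → Type
  [acg : ∀ n, AddCommGroup (C n)]
  chainsFree : ∀ n, Module.Free ℤ (C n)
  bd : ∀ n, C (n + 1) →+ C n
  bd_bd : ∀ (n : ℕ) (σ : C (n + 2)), bd n (bd (n + 1) σ) = 0
  Ω : ∀ n, AddSubgroup (C n →+ ℝ)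
  stokes : ∀ n, ∀ ω ∈ Ω n, ω.comp (bd n) ∈ Ω (n + 1)
  forms_inj : ∀ n, ∀ ω ∈ Ω (n + 1), (∀ σ : C (n + 1), ∃ k : ℤ, ω σ = (k : ℝ)) → ω = 0
  deRham_zero : ∀ z : C 0 →+ ℝ, (∀ σ : C 1, z (bd 0 σ) = 0) → z ∈ Ω 0
  deRham_surj : ∀ (n : ℕ) (z : C (n + 1) →+ ℝ), (∀ σ : C (n + 2), z (bd (n + 1) σ) = 0) →
    ∃ θ ∈ Ω (n + 1), ∃ w : C n →+ ℝ, ∀ σ : C (n + 1), z σ = θ σ + w (bd n σ)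
  deRham_exact : ∀ n, ∀ ω ∈ Ω (n + 1),
    (∃ T : C n →+ ℝ, ∀ σ : C (n + 1), ω σ = T (bd n σ)) →
      ∃ θ ∈ Ω n, ∀ σ : C (n + 1), ω σ = θ (bd n σ)
  int_rep : ∀ n, ∀ ω ∈ Ω (n + 1), (∀ σ : C (n + 2), ω (bd (n + 1) σ) = 0) →
    (∀ z : C (n + 1), bd n z = 0 → ∃ k : ℤ, ω z = (k : ℝ)) →
      ∃ (u : C (n + 1) →+ ℤ) (T : C n →+ ℝ),
        (∀ σ : C (n + 2), u (bd (n + 1) σ) = 0) ∧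
        ∀ σ : C (n + 1), ω σ = (u σ : ℝ) + T (bd n σ)

attribute [instance] CSModel.acg

/-- Reduction of a real number mod `ℤ`, as a homomorphism `ℝ →+ ℝ/ℤ`. -/
noncomputable def toCirc : ℝ →+ AddCircle (1 : ℝ) :=
  QuotientAddGroup.mk' (AddSubgroup.zmultiples (1 : ℝ))

namespace CSModel

variable (S : CSModel)

/-- The subgroup `Z_n ⊆ C_n` of cycles. -/
def Zc : ∀ n : ℕ, AddSubgroup (S.C n)
  | 0 => ⊤
  | n + 1 => (S.bd n).ker

/-- The boundary map, viewed as a map into cycles. -/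
def bdry (n : ℕ) : S.C (n + 1) →+ ↥(S.Zc n) :=
  (S.bd n).codRestrict (S.Zc n) fun σ => by
    cases n with
    | zero => exact AddSubgroup.mem_top _
    | succ m => exact AddMonoidHom.mem_ker.mpr (S.bd_bd m σ)

/-- The coboundary on `G`-valued cochains. -/
def δh (G : Type) [AddCommGroup G] (n : ℕ) : (S.C n →+ G) →+ (S.C (n + 1) →+ G) where
  toFun f := f.comp (S.bd n)
  map_zero' := by ext σ; simp
  map_add' f g := by ext σ; simp

/-- `G`-valued singular cocycles of degree `n`. -/
def Zcoch (G : Type) [AddCommGroup G] (n : ℕ) : AddSubgroup (S.C n →+ G) :=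
  (S.δh G n).ker

/-- `G`-valued singular coboundaries of degree `n`. -/
def Bcoch (G : Type) [AddCommGroup G] : ∀ n : ℕ, AddSubgroup (S.C n →+ G)
  | 0 => ⊥
  | m + 1 => (S.δh G m).range

/-- The singular cohomology `H^n(M; G)` of the model. -/
abbrev Hcoh (G : Type) [AddCommGroup G] (n : ℕ) : Type :=
  ↥(S.Zcoch G n) ⧸ (S.Bcoch G n).addSubgroupOf (S.Zcoch G n)

/-- The Cheeger-Simons group `Ȟ^{n+1}(M)` of differential characters: homomorphisms
`f : Z_n → ℝ/ℤ` such that `f ∘ ∂` is the mod-`ℤ` reduction of (integration against)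
some `(n+1)`-form `ω`. -/
noncomputable def Hhat (n : ℕ) : AddSubgroup (↥(S.Zc n) →+ AddCircle (1 : ℝ)) where
  carrier := {f | ∃ ω ∈ S.Ω (n + 1), ∀ σ : S.C (n + 1), f (S.bdry n σ) = toCirc (ω σ)}
  zero_mem' := ⟨0, zero_mem _, fun σ => by simp⟩
  add_mem' := by
    rintro f g ⟨ω, hω, hf⟩ ⟨ω', hω', hg⟩
    refine ⟨ω + ω', add_mem hω hω', fun σ => ?_⟩
    simp [hf σ, hg σ]
  neg_mem' := by
    rintro f ⟨ω, hω, hf⟩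
    refine ⟨-ω, neg_mem hω, fun σ => ?_⟩
    simp [hf σ]

/-- The subgroup `Ω^n_ℤ ⊆ Ω^n` of closed `n`-forms with integral periods. -/
def OmegaInt (n : ℕ) : AddSubgroup (S.C n →+ ℝ) where
  carrier := {ω | ω ∈ S.Ω n ∧ (∀ σ : S.C (n + 1), ω (S.bd n σ) = 0) ∧
    ∀ z ∈ S.Zc n, ∃ k : ℤ, ω z = (k : ℝ)}
  zero_mem' := ⟨zero_mem _, fun σ => by simp, fun z _ => ⟨0, by simp⟩⟩
  add_mem' := by
    rintro ω η ⟨h1, h2, h3⟩ ⟨h1', h2', h3'⟩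
    refine ⟨add_mem h1 h1', fun σ => by simp [h2 σ, h2' σ], fun z hz => ?_⟩
    obtain ⟨k, hk⟩ := h3 z hz
    obtain ⟨l, hl⟩ := h3' z hz
    exact ⟨k + l, by simp [hk, hl]⟩
  neg_mem' := by
    rintro ω ⟨h1, h2, h3⟩
    refine ⟨neg_mem h1, fun σ => by simp [h2 σ], fun z hz => ?_⟩
    obtain ⟨k, hk⟩ := h3 z hz
    exact ⟨-k, by simp [hk]⟩

/-- A real cochain lift `T` of a differential character `f`. -/
def IsLift (n : ℕ) (f : ↥(S.Zc n) →+ AddCircle (1 : ℝ)) (T : S.C n →+ ℝ) : Prop :=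
  ∀ z : ↥(S.Zc n), toCirc (T z.1) = f z

end CSModel


lemma toCirc_eq_zero_iff (x : ℝ) : toCirc x = 0 ↔ ∃ k : ℤ, x = (k : ℝ) := by
  rw [toCirc, QuotientAddGroup.mk'_apply, QuotientAddGroup.eq_zero_iff,
    AddSubgroup.mem_zmultiples_iff]
  constructor
  · rintro ⟨k, hk⟩; exact ⟨k, by simpa using hk.symm⟩
  · rintro ⟨k, hk⟩; exact ⟨k, by simp [hk]⟩

lemma toCirc_intCast (k : ℤ) : toCirc (k : ℝ) = 0 :=
  (toCirc_eq_zero_iff _).2 ⟨k, rfl⟩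

lemma toCirc_surjective : Function.Surjective toCirc :=
  QuotientAddGroup.mk'_surjective _

/-- An `ℝ`-valued homomorphism taking integer values comes from a `ℤ`-valued one. -/
lemma exists_int_hom {A : Type} [AddCommGroup A] (d : A →+ ℝ)
    (hd : ∀ a, ∃ k : ℤ, d a = (k : ℝ)) :
    ∃ v : A →+ ℤ, ∀ a, (v a : ℝ) = d a := by
  refine ⟨{ toFun := fun a => ⌊d a⌋, map_zero' := by simp, map_add' := ?_ }, ?_⟩
  · intro a b
    obtain ⟨k, hk⟩ := hd a; obtain ⟨l, hl⟩ := hd b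
    simp [map_add, hk, hl, ← Int.cast_add]
  · intro a; obtain ⟨k, hk⟩ := hd a; simp [hk]

/-- Homomorphisms from a chain group to `ℝ/ℤ` lift to `ℝ` (chains are free, hence
projective). -/
lemma lift_along_toCirc (S : CSModel) (m : ℕ) (E : S.C m →+ AddCircle (1 : ℝ)) :
    ∃ L : S.C m →+ ℝ, ∀ x, toCirc (L x) = E x := by
  haveI := S.chainsFree m
  obtain ⟨L, hL⟩ := Module.projective_lifting_property (R := ℤ)
    toCirc.toIntLinearMap E.toIntLinearMap toCirc_surjective
  exact ⟨L.toAddMonoidHom, fun x => LinearMap.congr_fun hL x⟩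

/-- `ℝ/ℤ` is divisible, hence injective: homomorphisms extend from subgroups. -/
lemma extend_from_subgroup {B : Type} [AddCommGroup B] (A : AddSubgroup B)
    (g : ↥A →+ AddCircle (1 : ℝ)) :
    ∃ G : B →+ AddCircle (1 : ℝ), ∀ a : ↥A, G a.1 = g a := by
  obtain ⟨G, hG⟩ := (Module.Baer.of_divisible
    (AddCircle (1 : ℝ))).extension_property_addMonoidHom A.subtype A.subtype_injective g
  exact ⟨G, fun a => DFunLike.congr_fun hG a⟩

/-- Every differential character admits a real cochain lift. -/
lemma CSModel.exists_lift (S : CSModel) (n : ℕ) (f : ↥(S.Zc n) →+ AddCircle (1 : ℝ)) :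
    ∃ T : S.C n →+ ℝ, S.IsLift n f T := by
  obtain ⟨F, hF⟩ := extend_from_subgroup (S.Zc n) f
  obtain ⟨T, hT⟩ := lift_along_toCirc S n F
  exact ⟨T, fun z => by rw [hT, hF]⟩

/-- A real cochain that is integer-valued on cycles agrees on cycles with an integer
cochain. -/
lemma CSModel.exists_int_on_cycles (S : CSModel) (n : ℕ) (d : S.C n →+ ℝ)
    (hd : ∀ z ∈ S.Zc n, ∃ k : ℤ, d z = (k : ℝ)) :
    ∃ v : S.C n →+ ℤ, ∀ z ∈ S.Zc n, (v z : ℝ) = d z := by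
  cases n with
  | zero =>
    obtain ⟨v, hv⟩ := exists_int_hom d (fun a => hd a (AddSubgroup.mem_top a))
    exact ⟨v, fun z _ => hv z⟩
  | succ m =>
    have hker : ∀ z, S.bd m z = 0 → toCirc (d z) = 0 := by
      intro z hz
      obtain ⟨k, hk⟩ := hd z (by exact AddMonoidHom.mem_ker.mpr hz)
      rw [hk]; exact toCirc_intCast k
    have hex : ∀ y : ↥(S.bd m).range, ∃ x, S.bd m x = y.1 := fun y => y.2
    choose sec hsec using hex
    have hwd : ∀ (x : S.C (m + 1)) (y : ↥(S.bd m).range), S.bd m x = y.1 →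
        toCirc (d x) = toCirc (d (sec y)) := by
      intro x y hxy
      have h0 : S.bd m (x - sec y) = 0 := by rw [map_sub, hxy, hsec, sub_self]
      have h2 := hker _ h0
      rw [map_sub, map_sub, sub_eq_zero] at h2
      exact h2
    let χ : ↥(S.bd m).range →+ AddCircle (1 : ℝ) :=
      { toFun := fun y => toCirc (d (sec y))
        map_zero' := hker _ (by rw [hsec]; rfl)
        map_add' := by
          intro y z
          have h0 : S.bd m (sec (y + z) - sec y - sec z) = 0 := by
            simp [map_sub, hsec]
          have h2 := hker _ h0
          rw [map_sub, map_sub, map_sub, map_sub, sub_sub, sub_eq_zero] at h2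
          exact h2 }
    obtain ⟨E, hE⟩ := extend_from_subgroup (S.bd m).range χ
    obtain ⟨L, hL⟩ := lift_along_toCirc S m E
    have hint : ∀ x, ∃ k : ℤ, (d - L.comp (S.bd m)) x = (k : ℝ) := by
      intro x
      rw [← toCirc_eq_zero_iff, AddMonoidHom.sub_apply, AddMonoidHom.comp_apply,
        map_sub, hL]
      have hmem : S.bd m x ∈ (S.bd m).range := ⟨x, rfl⟩
      have := hE ⟨S.bd m x, hmem⟩
      rw [this]
      have := hwd x ⟨S.bd m x, hmem⟩ rfl
      show toCirc (d x) - χ ⟨S.bd m x, hmem⟩ = 0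
      show toCirc (d x) - toCirc (d (sec ⟨S.bd m x, hmem⟩)) = 0
      rw [← this, sub_self]
    obtain ⟨v, hv⟩ := exists_int_hom _ hint
    refine ⟨v, fun z hz => ?_⟩
    have hz' : S.bd m z = 0 := hz
    rw [hv z, AddMonoidHom.sub_apply, AddMonoidHom.comp_apply, hz', map_zero, sub_zero]

open CSModel in
/-- Let `M` be a smooth manifold (presented by a model `S` of its smooth singular
chains and forms) and `f` a differential character in `Ȟ^{n+1}(M)`.  Then `f` admits a
real cochain lift `T`; there is a unique form `ω ∈ Ω^{n+1}` (the field strength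
`F(f) = ω`) with `f ∘ ∂ = ω mod ℤ`; this `ω` is closed with integral periods, and
there is a unique integral cohomology class `c(f) ∈ H^{n+1}(M; ℤ)` determined by any
real cochain lift `T` of `f` via `δT = ω - c` (in particular the real class of `ω` is
the image of `c(f)` under `H^{n+1}(M;ℤ) → H^{n+1}(M;ℝ)`).  Moreover both the field
strength map `F` and the characteristic class map `c` are surjective onto
`Ω^{n+1}_ℤ(M)` and `H^{n+1}(M; ℤ)` respectively. -/
theorem stmt_15 (S : CSModel) (n : ℕ)
    (f : ↥(S.Zc n) →+ AddCircle (1 : ℝ)) (hf : f ∈ S.Hhat n) :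
    (∃ T : S.C n →+ ℝ, S.IsLift n f T) ∧
    (∃! ω : ↥(S.Ω (n + 1)), ∀ σ : S.C (n + 1), f (S.bdry n σ) = toCirc (ω.1 σ)) ∧
    (∀ ω : ↥(S.Ω (n + 1)), (∀ σ : S.C (n + 1), f (S.bdry n σ) = toCirc (ω.1 σ)) →
      ((∀ σ : S.C (n + 2), ω.1 (S.bd (n + 1) σ) = 0) ∧
       (∀ z : S.C (n + 1), S.bd n z = 0 → ∃ k : ℤ, ω.1 z = (k : ℝ)) ∧
       ∃! cc : S.Hcoh ℤ (n + 1), ∀ T : S.C n →+ ℝ, S.IsLift n f T →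
         ∃ u : ↥(S.Zcoch ℤ (n + 1)), cc = QuotientAddGroup.mk u ∧
           ∀ σ : S.C (n + 1), ω.1 σ = (u.1 σ : ℝ) + T (S.bd n σ))) ∧
    (∀ ω₀ : S.C (n + 1) →+ ℝ, ω₀ ∈ S.Ω (n + 1) →
      (∀ σ : S.C (n + 2), ω₀ (S.bd (n + 1) σ) = 0) →
      (∀ z : S.C (n + 1), S.bd n z = 0 → ∃ k : ℤ, ω₀ z = (k : ℝ)) →
      ∃ g ∈ S.Hhat n, ∀ σ : S.C (n + 1), g (S.bdry n σ) = toCirc (ω₀ σ)) ∧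
    (∀ u : ↥(S.Zcoch ℤ (n + 1)), ∃ g ∈ S.Hhat n,
      ∃ (ω : ↥(S.Ω (n + 1))) (T : S.C n →+ ℝ),
        (∀ σ : S.C (n + 1), g (S.bdry n σ) = toCirc (ω.1 σ)) ∧ S.IsLift n g T ∧
        ∀ σ : S.C (n + 1), ω.1 σ = (u.1 σ : ℝ) + T (S.bd n σ)) := by

  obtain ⟨ω₁, hω₁Ω, hω₁f⟩ := hf
  obtain ⟨T₁, hT₁⟩ := S.exists_lift n f
  have hbd_mem : ∀ σ : S.C (n + 1), S.bd n σ ∈ S.Zc n := fun σ => (S.bdry n σ).2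
  have hdiff : ∀ (ω : S.C (n + 1) →+ ℝ), (∀ σ, f (S.bdry n σ) = toCirc (ω σ)) →
      ∀ (T : S.C n →+ ℝ), S.IsLift n f T →
      ∀ σ, ∃ k : ℤ, (ω - T.comp (S.bd n)) σ = (k : ℝ) := by
    intro ω hω T hT σ
    rw [← toCirc_eq_zero_iff, AddMonoidHom.sub_apply, AddMonoidHom.comp_apply,
      map_sub, ← hω σ, sub_eq_zero]
    exact (hT (S.bdry n σ)).symm
  refine ⟨⟨T₁, hT₁⟩, ?_, ?_, ?_, ?_⟩
  · -- unique field strength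
    refine ⟨⟨ω₁, hω₁Ω⟩, hω₁f, ?_⟩
    rintro ⟨ω', hω'Ω⟩ hω'
    have h0 : ω' - ω₁ = 0 := by
      apply S.forms_inj n _ (sub_mem hω'Ω hω₁Ω)
      intro σ
      rw [← toCirc_eq_zero_iff, AddMonoidHom.sub_apply, map_sub, ← hω' σ, ← hω₁f σ,
        sub_self]
    exact Subtype.ext (sub_eq_zero.mp h0)
  · -- properties of the field strength
    intro ω hω
    have hclosed : ∀ σ : S.C (n + 2), ω.1 (S.bd (n + 1) σ) = 0 := by
      have h0 : ω.1.comp (S.bd (n + 1)) = 0 := by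
        apply S.forms_inj (n + 1) _ (S.stokes (n + 1) ω.1 ω.2)
        intro σ
        rw [← toCirc_eq_zero_iff]
        have hb : S.bdry n (S.bd (n + 1) σ) = 0 := Subtype.ext (S.bd_bd n σ)
        have h1 := hω (S.bd (n + 1) σ)
        rw [hb, map_zero] at h1
        exact h1.symm
      intro σ; exact DFunLike.congr_fun h0 σ
    have hper : ∀ z : S.C (n + 1), S.bd n z = 0 → ∃ k : ℤ, ω.1 z = (k : ℝ) := by
      intro z hz
      obtain ⟨k, hk⟩ := hdiff ω.1 hω T₁ hT₁ z
      rw [AddMonoidHom.sub_apply, AddMonoidHom.comp_apply, hz, map_zero, sub_zero] at hk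
      exact ⟨k, hk⟩
    have hmk : ∀ T : S.C n →+ ℝ, S.IsLift n f T →
        ∃ u : ↥(S.Zcoch ℤ (n + 1)), ∀ σ : S.C (n + 1),
          ω.1 σ = (u.1 σ : ℝ) + T (S.bd n σ) := by
      intro T hT
      obtain ⟨u, hu⟩ := exists_int_hom (ω.1 - T.comp (S.bd n)) (hdiff ω.1 hω T hT)
      have hmem : u ∈ S.Zcoch ℤ (n + 1) := by
        refine AddMonoidHom.mem_ker.mpr ?_
        ext σ
        show u (S.bd (n + 1) σ) = 0
        have h1 := hu (S.bd (n + 1) σ)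
        rw [AddMonoidHom.sub_apply, AddMonoidHom.comp_apply, S.bd_bd, map_zero, sub_zero,
          hclosed] at h1
        exact_mod_cast h1
      refine ⟨⟨u, hmem⟩, fun σ => ?_⟩
      have h1 := hu σ
      rw [AddMonoidHom.sub_apply, AddMonoidHom.comp_apply] at h1
      simp only []
      linarith
    obtain ⟨u₁, hu₁⟩ := hmk T₁ hT₁
    refine ⟨hclosed, hper, QuotientAddGroup.mk u₁, ?_, ?_⟩
    · intro T hT
      obtain ⟨u, hu⟩ := hmk T hT
      have hvint : ∀ z ∈ S.Zc n, ∃ k : ℤ, (T₁ - T) z = (k : ℝ) := by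
        intro z hz
        rw [← toCirc_eq_zero_iff, AddMonoidHom.sub_apply, map_sub, hT₁ ⟨z, hz⟩,
          hT ⟨z, hz⟩, sub_self]
      obtain ⟨v, hv⟩ := S.exists_int_on_cycles n (T₁ - T) hvint
      refine ⟨u, ?_, hu⟩
      rw [QuotientAddGroup.eq, AddSubgroup.mem_addSubgroupOf]
      refine ⟨v, ?_⟩
      ext σ
      show v (S.bd n σ) = (-u₁ + u).1 σ
      have h1 : (v (S.bd n σ) : ℝ) = T₁ (S.bd n σ) - T (S.bd n σ) := by
        rw [hv _ (hbd_mem σ)]; simp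
      have h2 := hu σ
      have h3 := hu₁ σ
      have h4 : v (S.bd n σ) = u.1 σ - u₁.1 σ := by
        have : (v (S.bd n σ) : ℝ) = ((u.1 σ - u₁.1 σ : ℤ) : ℝ) := by push_cast; linarith
        exact_mod_cast this
      simp [h4]
      ring
    · intro cc' hcc'
      obtain ⟨u', h1, h2⟩ := hcc' T₁ hT₁
      have he : u' = u₁ := by
        refine Subtype.ext (AddMonoidHom.ext fun σ => ?_)
        have ha := h2 σ
        have hb := hu₁ σ
        exact_mod_cast (by linarith : ((u'.1 σ : ℝ)) = ((u₁.1 σ : ℝ)))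
      rw [h1, he]
  · -- surjectivity of the field strength
    intro ω₀ hΩ hcl hint
    obtain ⟨u, T, hucoc, hrep⟩ := S.int_rep n ω₀ hΩ hcl hint
    have key : ∀ σ, toCirc (T (S.bd n σ)) = toCirc (ω₀ σ) := by
      intro σ
      rw [hrep σ, map_add, toCirc_intCast, zero_add]
    exact ⟨(toCirc.comp T).comp (S.Zc n).subtype, ⟨ω₀, hΩ, key⟩, key⟩
  · -- surjectivity of the characteristic class
    intro u
    have hz : ∀ σ : S.C (n + 2), ((Int.castAddHom ℝ).comp u.1) (S.bd (n + 1) σ) = 0 := by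
      intro σ
      have h0 : u.1 (S.bd (n + 1) σ) = 0 := DFunLike.congr_fun (AddMonoidHom.mem_ker.mp u.2) σ
      simp [h0]
    obtain ⟨θ, hθΩ, w, hw⟩ := S.deRham_surj n ((Int.castAddHom ℝ).comp u.1) hz
    have heq : ∀ σ : S.C (n + 1), θ σ = (u.1 σ : ℝ) + (-w) (S.bd n σ) := by
      intro σ
      have := hw σ
      simp only [AddMonoidHom.comp_apply, Int.coe_castAddHom, AddMonoidHom.neg_apply] at this ⊢
      linarith
    have key : ∀ σ, toCirc ((-w) (S.bd n σ)) = toCirc (θ σ) := by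
      intro σ
      rw [heq σ, map_add, toCirc_intCast, zero_add]
    exact ⟨(toCirc.comp (-w)).comp (S.Zc n).subtype, ⟨θ, hθΩ, key⟩, ⟨θ, hθΩ⟩, -w, key,
      fun z => rfl, heq⟩
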